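/- Let p be a prime and let f : ℕ → (ZMod p)[X] be the polynomial sequence defined by f(0) = 0, f(1) = 1 and f(n+2) = X·f(n+1) + f(n). Let N ≥ 1 be a natural number and let q ∈ (ZMod p)[X] be an irreducible polynomial that divides both f(N+1) − 1 and f(N). Then in the field K := (ZMod p)[X]/(q), the matrix Y = [[θ, 1],[1, 0]] over K, where θ is the image of X in K, satisfies Y^N = 1 (the identity matrix); i.e., the generalized Tillich–Zémor hash function over K with generator parameter θ has the collision H(0^N) = H(empty word). -/
import Mathlib


/-- The sequence of polynomials over `ZMod p` with `f(0) = 0`, `f(1) = 1`,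
`f(n+2) = X·f(n+1) + f(n)`, governing the powers of the Tillich–Zémor generator. -/
noncomputable def tzPoly (p : ℕ) : ℕ → Polynomial (ZMod p)
  | 0 => 0
  | 1 => 1
  | n + 2 => Polynomial.X * tzPoly p (n + 1) + tzPoly p n

lemma tz_rec (p : ℕ) (n : ℕ) :
    tzPoly p (n + 2) = Polynomial.X * tzPoly p (n + 1) + tzPoly p n := rfl

lemma tz_pow (p : ℕ) (q : Polynomial (ZMod p)) (n : ℕ) (hn : 1 ≤ n) :
    (!![Ideal.Quotient.mk (Ideal.span {q}) Polynomial.X, 1; 1, 0] :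
        Matrix (Fin 2) (Fin 2) (Polynomial (ZMod p) ⧸ Ideal.span {q})) ^ n =
    !![Ideal.Quotient.mk (Ideal.span {q}) (tzPoly p (n+1)),
       Ideal.Quotient.mk (Ideal.span {q}) (tzPoly p n);
       Ideal.Quotient.mk (Ideal.span {q}) (tzPoly p n),
       Ideal.Quotient.mk (Ideal.span {q}) (tzPoly p (n-1))] := by
  induction n, hn using Nat.le_induction with
  | base =>
    simp [tzPoly, Matrix.eta_fin_two (!![_,_;_,_])]
  | succ n hn ih =>
    rw [pow_succ, ih]
    obtain ⟨m, rfl⟩ := Nat.exists_eq_add_of_le hn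
    simp only [show (1:ℕ) + m = m + 1 from by omega, Nat.add_sub_cancel]
    ext i j
    fin_cases i <;> fin_cases j <;>
      simp [Matrix.mul_apply, Fin.sum_univ_succ, tz_rec, mul_comm] <;> ring

/-- Malicious parameters for the generalized Tillich–Zémor hash function:
if an irreducible `q` divides both `f(N+1) - 1` and `f(N)`, then over the field
`K = (ZMod p)[X]/(q)` the generator `Y = !![θ, 1; 1, 0]` (with `θ` the image of `X`)
satisfies `Y^N = 1`, giving the collision `H(0^N) = H(empty word)`. -/
theorem tz_malicious_polynomial (p : ℕ) [Fact p.Prime] (N : ℕ) (hN : 1 ≤ N)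
    (q : Polynomial (ZMod p)) (hq : Irreducible q)
    (h1 : q ∣ tzPoly p (N + 1) - 1) (h2 : q ∣ tzPoly p N) :
    (!![Ideal.Quotient.mk (Ideal.span {q}) Polynomial.X, 1; 1, 0] :
        Matrix (Fin 2) (Fin 2) (Polynomial (ZMod p) ⧸ Ideal.span {q})) ^ N = 1 := by
  rw [tz_pow p q N hN]
  have e1 : Ideal.Quotient.mk (Ideal.span {q}) (tzPoly p (N+1)) = 1 := by
    have : Ideal.Quotient.mk (Ideal.span {q}) (tzPoly p (N+1) - 1) = 0 := by
      rw [Ideal.Quotient.eq_zero_iff_mem, Ideal.mem_span_singleton]; exact h1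
    rw [map_sub, sub_eq_zero] at this
    simpa using this
  have e2 : Ideal.Quotient.mk (Ideal.span {q}) (tzPoly p N) = 0 := by
    rw [Ideal.Quotient.eq_zero_iff_mem, Ideal.mem_span_singleton]; exact h2
  have e3 : Ideal.Quotient.mk (Ideal.span {q}) (tzPoly p (N-1)) = 1 := by
    obtain ⟨m, rfl⟩ := Nat.exists_eq_add_of_le hN
    simp only [show (1:ℕ) + m = m + 1 from by omega, Nat.add_sub_cancel] at e1 e2 ⊢
    rw [show m + 1 + 1 = m + 2 from rfl, tz_rec, map_add, map_mul, e2,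
      mul_zero, zero_add] at e1
    exact e1
  rw [e1, e2, e3]
  ext i j; fin_cases i <;> fin_cases j <;> simp
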